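/- For a multiplicative subset L of R, the localization of the Hasse-Schmidt algebra satisfies HS^m_{R/S}[L^{-1}] ≅ HS^m_{R[L^{-1}]/S} as R[L^{-1}]-algebras. -/

import Mathlib

/-!
`HS^m_{R/S}` classifies truncated Hasse–Schmidt derivations `D : R → A[t]/(t^{m+1})` (ring homs
with `D s` constant for `s ∈ S`) via `d^i x ↦ coeff_i (D x)`. If `D l` has invertible constant
term `l`, then `D l` is a unit because `t` is nilpotent, so derivations of `R` sending `L` to units
extend uniquely to `R[L⁻¹]`. This gives `d^i x ↦ d^i (x/1)` from `HS^m_{R/S}[L⁻¹]` to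
`HS^m_{R[L⁻¹]/S}`, and the other way the map classified by the extension to `R[L⁻¹]` of the
universal derivation of `R` with values in `HS^m_{R/S}[L⁻¹]`. Ring homs out of a Hasse–Schmidt
algebra are determined by their values on the `d^i x`, which shows the two maps are inverse.
-/

noncomputable section
open MvPolynomial

/-- The universal symbols `d^n x` for the Hasse–Schmidt algebra. -/
def hsGen (R : Type*) [CommRing R] (m : ℕ) (n : ℕ) (x : R) :
    MvPolynomial ({i : ℕ // 1 ≤ i ∧ i ≤ m} × R) R :=
  if h : 1 ≤ n ∧ n ≤ m then X (⟨n, h⟩, x) else if n = 0 then C x else 0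

/-- The ideal of Hasse–Schmidt relations. -/
def hsRel (S R : Type*) [CommRing S] [CommRing R] [Algebra S R] (m : ℕ) :
    Ideal (MvPolynomial ({i : ℕ // 1 ≤ i ∧ i ≤ m} × R) R) :=
  Ideal.span {p | (∃ i : ℕ, ∃ x y : R,
      p = hsGen R m i (x + y) - hsGen R m i x - hsGen R m i y) ∨
    (∃ i : ℕ, 1 ≤ i ∧ ∃ s : S, p = hsGen R m i (algebraMap S R s)) ∨
    (∃ k : ℕ, k ≤ m ∧ ∃ x y : R, p = hsGen R m k (x * y) -
      ∑ q ∈ Finset.HasAntidiagonal.antidiagonal k, hsGen R m q.1 x * hsGen R m q.2 y)}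

/-- The Hasse–Schmidt algebra `HS^m_{R/S}`, which represents the functor
`Q ↦ {Hasse–Schmidt derivations of order m from R to Q}`, equivalently
`Hom_{S-alg}(HS^m_{R/S}, Q) ≅ Hom_{S-alg}(R, Q[t]/(t^{m+1}))` naturally in `Q`. -/
def HSAlg (S R : Type*) [CommRing S] [CommRing R] [Algebra S R] (m : ℕ) : Type _ :=
  MvPolynomial ({i : ℕ // 1 ≤ i ∧ i ≤ m} × R) R ⧸ hsRel S R m

section
variable (S R : Type*) [CommRing S] [CommRing R] [Algebra S R] (m : ℕ)

instance : CommRing (HSAlg S R m) := Ideal.Quotient.commRing _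
instance : Algebra S (HSAlg S R m) := Ideal.Quotient.algebra S
instance : Algebra R (HSAlg S R m) := Ideal.Quotient.algebra R

end

section
variable (S R : Type*) [CommRing S] [CommRing R] [Algebra S R] (m : ℕ) (L : Submonoid R)

/-- `R[L⁻¹]` as an `S`-algebra. -/
instance (priority := 10) : Algebra S (Localization L) :=
  ((algebraMap R (Localization L)).comp (algebraMap S R)).toAlgebra

/-- The image of `L` in the Hasse–Schmidt algebra `HS^m_{R/S}`. -/
def hsImageSubmonoid : Submonoid (HSAlg S R m) :=
  Submonoid.map (algebraMap R (HSAlg S R m)) L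

/-- The canonical map `R[L⁻¹] → HS^m_{R/S}[L⁻¹]` induced by `R → HS^m_{R/S}`. -/
def hsLocCanon : Localization L →+* Localization (hsImageSubmonoid S R m L) :=
  IsLocalization.map (T := hsImageSubmonoid S R m L)
    (Localization (hsImageSubmonoid S R m L)) (algebraMap R (HSAlg S R m))
    (fun r hr => Submonoid.mem_comap.2 (Submonoid.mem_map_of_mem _ hr))

end

abbrev TruncPoly (A : Type*) [CommRing A] (m : ℕ) : Type _ :=
  Polynomial A ⧸ Ideal.span {(Polynomial.X : Polynomial A) ^ (m + 1)}

namespace TruncPoly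

variable {A B : Type*} [CommRing A] [CommRing B] {m : ℕ}

def mk : Polynomial A →+* TruncPoly A m := Ideal.Quotient.mk _

lemma mk_surjective : Function.Surjective (mk : Polynomial A →+* TruncPoly A m) :=
  Ideal.Quotient.mk_surjective

lemma mk_X_pow_succ : (mk (Polynomial.X ^ (m + 1)) : TruncPoly A m) = 0 :=
  Ideal.Quotient.eq_zero_iff_mem.2 (Ideal.mem_span_singleton_self _)

/-- Only meaningful for `i ≤ m`. -/
def coeff (i : ℕ) (t : TruncPoly A m) : A := (Quotient.out t).coeff i

lemma coeff_mk {i : ℕ} (hi : i ≤ m) (p : Polynomial A) :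
    coeff i (mk p : TruncPoly A m) = p.coeff i := by
  have hdvd : Polynomial.X ^ (m + 1) ∣ Quotient.out (mk p : TruncPoly A m) - p :=
    Ideal.mem_span_singleton.1 (Ideal.Quotient.eq.1 (Ideal.Quotient.mk_out _))
  rw [coeff, ← sub_eq_zero, ← Polynomial.coeff_sub]
  exact Polynomial.X_pow_dvd_iff.1 hdvd i (Nat.lt_succ_of_le hi)

@[ext]
lemma ext {s t : TruncPoly A m} (h : ∀ i ≤ m, coeff i s = coeff i t) : s = t := by
  obtain ⟨p, rfl⟩ := mk_surjective s
  obtain ⟨q, rfl⟩ := mk_surjective t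
  refine Ideal.Quotient.eq.2 (Ideal.mem_span_singleton.2 (Polynomial.X_pow_dvd_iff.2 ?_))
  intro i hi
  have hi : i ≤ m := Nat.lt_succ_iff.1 hi
  rw [Polynomial.coeff_sub, ← coeff_mk hi, ← coeff_mk hi, h i hi, sub_self]

lemma coeff_add {i : ℕ} (hi : i ≤ m) (s t : TruncPoly A m) :
    coeff i (s + t) = coeff i s + coeff i t := by
  obtain ⟨p, rfl⟩ := mk_surjective s
  obtain ⟨q, rfl⟩ := mk_surjective t
  rw [← map_add, coeff_mk hi, coeff_mk hi, coeff_mk hi, Polynomial.coeff_add]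

lemma coeff_mul {k : ℕ} (hk : k ≤ m) (s t : TruncPoly A m) :
    coeff k (s * t) = ∑ q ∈ Finset.HasAntidiagonal.antidiagonal k, coeff q.1 s * coeff q.2 t := by
  obtain ⟨p, rfl⟩ := mk_surjective s
  obtain ⟨q, rfl⟩ := mk_surjective t
  rw [← map_mul, coeff_mk hk, Polynomial.coeff_mul]
  refine Finset.sum_congr rfl fun ij hij => ?_
  have hij : ij.1 + ij.2 = k := Finset.HasAntidiagonal.mem_antidiagonal.1 hij
  rw [coeff_mk (by omega), coeff_mk (by omega)]

lemma coeff_mk_sum_monomial (a : ℕ → A) {i : ℕ} (hi : i ≤ m) :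
    coeff i (mk (∑ j ∈ Finset.range (m + 1), Polynomial.monomial j (a j)) : TruncPoly A m) =
      a i := by
  rw [coeff_mk hi, Polynomial.finsetSum_coeff,
    Finset.sum_eq_single_of_mem i (Finset.mem_range.2 (Nat.lt_succ_of_le hi))]
  · exact Polynomial.coeff_monomial_same i (a i)
  · exact fun j _ hji => Polynomial.coeff_monomial_of_ne _ (Ne.symm hji)

def constCoeff : TruncPoly A m →+* A :=
  Ideal.Quotient.lift _ Polynomial.constantCoeff fun p hp => by
    obtain ⟨q, rfl⟩ := Ideal.mem_span_singleton.1 hp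
    simp

lemma coeff_zero_eq_constCoeff (t : TruncPoly A m) : coeff 0 t = constCoeff t := by
  obtain ⟨p, rfl⟩ := mk_surjective t
  rw [coeff_mk (Nat.zero_le m)]
  rfl

lemma isUnit_of_isUnit_constCoeff {t : TruncPoly A m} (h : IsUnit (constCoeff t)) :
    IsUnit t := by
  obtain ⟨p, rfl⟩ := mk_surjective t
  have hX : IsNilpotent (mk Polynomial.X : TruncPoly A m) :=
    ⟨m + 1, by rw [← map_pow, mk_X_pow_succ]⟩
  rw [← Polynomial.divX_mul_X_add p, map_add, map_mul]
  refine ((Commute.all _ _).isNilpotent_mul_left hX).isUnit_add_right_of_commute ?_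
    (Commute.all _ _)
  rw [← coeff_zero_eq_constCoeff, coeff_mk (Nat.zero_le m)] at h
  exact h.map (mk.comp Polynomial.C)

def map (f : A →+* B) : TruncPoly A m →+* TruncPoly B m :=
  Ideal.quotientMap _ (Polynomial.mapRingHom f) <| Ideal.span_le.2 <| by
    rintro _ rfl
    simp

lemma map_mk (f : A →+* B) (p : Polynomial A) :
    map f (mk p : TruncPoly A m) = mk (p.map f) :=
  Ideal.quotientMap_mk

lemma coeff_map (f : A →+* B) {i : ℕ} (hi : i ≤ m) (t : TruncPoly A m) :
    coeff i (map f t) = f (coeff i t) := by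
  obtain ⟨p, rfl⟩ := mk_surjective t
  rw [map_mk, coeff_mk hi, coeff_mk hi, Polynomial.coeff_map]

end TruncPoly

section HSGen

variable {R : Type*} [CommRing R] {m : ℕ}

lemma hsGen_zero (x : R) : hsGen R m 0 x = C x := by
  simp [hsGen]

lemma hsGen_of_le {i : ℕ} (hi : 1 ≤ i ∧ i ≤ m) (x : R) : hsGen R m i x = X (⟨i, hi⟩, x) :=
  dif_pos hi

lemma hsGen_of_lt {i : ℕ} (hi : m < i) (x : R) : hsGen R m i x = 0 := by
  have h₁ : ¬(1 ≤ i ∧ i ≤ m) := by omega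
  have h₂ : i ≠ 0 := by omega
  simp [hsGen, h₁, h₂]

end HSGen

namespace HSAlg

variable (S : Type*) {R : Type*} [CommRing S] [CommRing R] [Algebra S R] (m : ℕ)

def gen (i : ℕ) (x : R) : HSAlg S R m := Ideal.Quotient.mk (hsRel S R m) (hsGen R m i x)

variable {S m}

lemma gen_zero (x : R) : gen S m 0 x = algebraMap R (HSAlg S R m) x := by
  rw [gen, hsGen_zero]
  rfl

lemma gen_add (i : ℕ) (x y : R) : gen S m i (x + y) = gen S m i x + gen S m i y := by
  have h : hsGen R m i (x + y) - hsGen R m i x - hsGen R m i y ∈ hsRel S R m :=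
    Ideal.subset_span (Or.inl ⟨i, x, y, rfl⟩)
  rwa [← Ideal.Quotient.eq_zero_iff_mem, map_sub, map_sub, sub_sub, sub_eq_zero] at h

lemma gen_algebraMap {i : ℕ} (hi : 1 ≤ i) (s : S) : gen S m i (algebraMap S R s) = 0 :=
  Ideal.Quotient.eq_zero_iff_mem.2 (Ideal.subset_span (Or.inr (Or.inl ⟨i, hi, s, rfl⟩)))

lemma gen_mul {k : ℕ} (hk : k ≤ m) (x y : R) :
    gen S m k (x * y) =
      ∑ q ∈ Finset.HasAntidiagonal.antidiagonal k, gen S m q.1 x * gen S m q.2 y := by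
  have h : hsGen R m k (x * y) -
      ∑ q ∈ Finset.HasAntidiagonal.antidiagonal k, hsGen R m q.1 x * hsGen R m q.2 y ∈
        hsRel S R m :=
    Ideal.subset_span (Or.inr (Or.inr ⟨k, hk, x, y, rfl⟩))
  rw [← Ideal.Quotient.eq_zero_iff_mem, map_sub, sub_eq_zero, map_sum] at h
  simp only [map_mul] at h
  exact h

lemma gen_one {i : ℕ} (hi : 1 ≤ i) : gen S m i (1 : R) = 0 := by
  have h := gen_algebraMap (R := R) (m := m) hi (1 : S)
  rwa [map_one] at h

@[ext]
lemma hom_ext {B : Type*} [Semiring B] {f g : HSAlg S R m →+* B}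
    (h : ∀ i ≤ m, ∀ x : R, f (gen S m i x) = g (gen S m i x)) : f = g := by
  refine Ideal.Quotient.ringHom_ext (MvPolynomial.ringHom_ext (fun x => ?_) fun v => ?_)
  · have hx := h 0 (Nat.zero_le m) x
    rw [gen, hsGen_zero] at hx
    exact hx
  · have hv := h v.1 v.1.2.2 v.2
    rw [gen, hsGen_of_le v.1.2] at hv
    exact hv

variable {A : Type*} [CommRing A]

section lift

variable (D : R →+* TruncPoly A m)

def liftPoly : MvPolynomial ({i : ℕ // 1 ≤ i ∧ i ≤ m} × R) R →+* A :=
  eval₂Hom (TruncPoly.constCoeff.comp D) fun v => TruncPoly.coeff v.1 (D v.2)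

lemma liftPoly_hsGen {i : ℕ} (hi : i ≤ m) (x : R) :
    liftPoly D (hsGen R m i x) = TruncPoly.coeff i (D x) := by
  rcases Nat.eq_zero_or_pos i with rfl | hpos
  · rw [hsGen_zero, liftPoly, eval₂Hom_C, TruncPoly.coeff_zero_eq_constCoeff]
    rfl
  · rw [hsGen_of_le ⟨hpos, hi⟩, liftPoly, eval₂Hom_X']

variable (S) in
lemma hsRel_le_ker_liftPoly
    (hD : ∀ s : S, ∀ i, 1 ≤ i → i ≤ m → TruncPoly.coeff i (D (algebraMap S R s)) = 0) :
    hsRel S R m ≤ RingHom.ker (liftPoly D) := by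
  rw [hsRel, Ideal.span_le]
  rintro p (⟨i, x, y, rfl⟩ | ⟨i, hi, s, rfl⟩ | ⟨k, hk, x, y, rfl⟩) <;>
    simp only [SetLike.mem_coe, RingHom.mem_ker]
  · rcases le_or_gt i m with him | him
    · rw [map_sub, map_sub, liftPoly_hsGen D him, liftPoly_hsGen D him, liftPoly_hsGen D him,
        map_add, TruncPoly.coeff_add him, sub_sub, sub_self]
    · simp [hsGen_of_lt him]
  · rcases le_or_gt i m with him | him
    · rw [liftPoly_hsGen D him, hD s i hi him]
    · simp [hsGen_of_lt him]
  · rw [map_sub, map_sum, liftPoly_hsGen D hk, map_mul, TruncPoly.coeff_mul hk, sub_eq_zero]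
    refine Finset.sum_congr rfl fun q hq => ?_
    have hq : q.1 + q.2 = k := Finset.HasAntidiagonal.mem_antidiagonal.1 hq
    rw [map_mul, liftPoly_hsGen D (by omega), liftPoly_hsGen D (by omega)]

variable (S) in
def lift (hD : ∀ s : S, ∀ i, 1 ≤ i → i ≤ m → TruncPoly.coeff i (D (algebraMap S R s)) = 0) :
    HSAlg S R m →+* A :=
  Ideal.Quotient.lift _ (liftPoly D) fun _ hp => hsRel_le_ker_liftPoly S D hD hp

lemma lift_gen (hD : ∀ s : S, ∀ i, 1 ≤ i → i ≤ m → TruncPoly.coeff i (D (algebraMap S R s)) = 0)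
    {i : ℕ} (hi : i ≤ m) (x : R) : lift S D hD (gen S m i x) = TruncPoly.coeff i (D x) :=
  (Ideal.Quotient.lift_mk _ _ _).trans (liftPoly_hsGen D hi x)

end lift

section toTrunc

variable (ρ : HSAlg S R m →+* A)

def toTrunc : R →+* TruncPoly A m := RingHom.mk'
  { toFun := fun x =>
      TruncPoly.mk (∑ i ∈ Finset.range (m + 1), Polynomial.monomial i (ρ (gen S m i x)))
    map_one' := TruncPoly.ext fun i hi => by
      rw [TruncPoly.coeff_mk_sum_monomial _ hi, ← map_one TruncPoly.mk, TruncPoly.coeff_mk hi,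
        Polynomial.coeff_one]
      rcases Nat.eq_zero_or_pos i with rfl | hpos
      · rw [gen_zero, map_one, map_one, if_pos rfl]
      · rw [gen_one hpos, map_zero, if_neg hpos.ne']
    map_mul' x y := TruncPoly.ext fun k hk => by
      simp only [TruncPoly.coeff_mul hk, TruncPoly.coeff_mk_sum_monomial _ hk, gen_mul hk]
      rw [map_sum]
      refine Finset.sum_congr rfl fun q hq => ?_
      have hq : q.1 + q.2 = k := Finset.HasAntidiagonal.mem_antidiagonal.1 hq
      rw [map_mul, TruncPoly.coeff_mk_sum_monomial _ (by omega : q.1 ≤ m),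
        TruncPoly.coeff_mk_sum_monomial _ (by omega : q.2 ≤ m)] }
  fun x y => TruncPoly.ext fun i hi => by
    simp only [MonoidHom.coe_mk, OneHom.coe_mk]
    rw [TruncPoly.coeff_add hi, TruncPoly.coeff_mk_sum_monomial _ hi,
      TruncPoly.coeff_mk_sum_monomial _ hi, TruncPoly.coeff_mk_sum_monomial _ hi, gen_add, map_add]

lemma coeff_toTrunc {i : ℕ} (hi : i ≤ m) (x : R) :
    TruncPoly.coeff i (toTrunc ρ x) = ρ (gen S m i x) :=
  TruncPoly.coeff_mk_sum_monomial _ hi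

lemma isUnit_toTrunc {l : R} (hl : IsUnit (ρ (algebraMap R (HSAlg S R m) l))) :
    IsUnit (toTrunc ρ l) := by
  refine TruncPoly.isUnit_of_isUnit_constCoeff ?_
  rwa [← TruncPoly.coeff_zero_eq_constCoeff, coeff_toTrunc ρ (Nat.zero_le m), gen_zero]

end toTrunc

end HSAlg

section
variable (S R : Type*) [CommRing S] [CommRing R] [Algebra S R] (m : ℕ) (L : Submonoid R)

open HSAlg

def hsAlgToLoc : HSAlg S R m →+* HSAlg S (Localization L) m :=
  lift S ((toTrunc (RingHom.id _)).comp (algebraMap R (Localization L))) fun s i hi him => by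
    rw [RingHom.comp_apply, coeff_toTrunc _ him]
    exact gen_algebraMap hi s

variable {S R m L}

lemma hsAlgToLoc_gen {i : ℕ} (hi : i ≤ m) (x : R) :
    hsAlgToLoc S R m L (gen S m i x) = gen S m i (algebraMap R (Localization L) x) := by
  rw [hsAlgToLoc, lift_gen _ _ hi, RingHom.comp_apply, coeff_toTrunc _ hi, RingHom.id_apply]

lemma hsAlgToLoc_algebraMap (x : R) :
    hsAlgToLoc S R m L (algebraMap R (HSAlg S R m) x) =
      algebraMap (Localization L) (HSAlg S (Localization L) m)
        (algebraMap R (Localization L) x) := by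
  rw [← gen_zero, hsAlgToLoc_gen (Nat.zero_le m), gen_zero]

variable (S R m L)

def hsLocalizedToLoc : Localization (hsImageSubmonoid S R m L) →+* HSAlg S (Localization L) m :=
  IsLocalization.lift (M := hsImageSubmonoid S R m L) (g := hsAlgToLoc S R m L) <| by
    rintro ⟨_, l, hl, rfl⟩
    rw [hsAlgToLoc_algebraMap]
    exact (IsLocalization.map_units (Localization L) ⟨l, hl⟩).map _

def hsLocTrunc : Localization L →+* TruncPoly (Localization (hsImageSubmonoid S R m L)) m :=
  IsLocalization.lift (M := L) (g := toTrunc (algebraMap _ _)) fun l =>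
    isUnit_toTrunc _ (IsLocalization.map_units _ (⟨_, l, l.2, rfl⟩ : hsImageSubmonoid S R m L))

variable {S R m L}

lemma coeff_hsLocTrunc_algebraMap {i : ℕ} (hi : i ≤ m) (x : R) :
    TruncPoly.coeff i (hsLocTrunc S R m L (algebraMap R (Localization L) x)) =
      algebraMap _ (Localization (hsImageSubmonoid S R m L)) (gen S m i x) := by
  rw [hsLocTrunc, IsLocalization.lift_eq, coeff_toTrunc _ hi]

variable (S R m L)

def hsLocToLocalized : HSAlg S (Localization L) m →+* Localization (hsImageSubmonoid S R m L) :=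
  lift S (hsLocTrunc S R m L) fun s i hi him => by
    rw [show algebraMap S (Localization L) s =
        algebraMap R (Localization L) (algebraMap S R s) from rfl,
      coeff_hsLocTrunc_algebraMap him, gen_algebraMap hi, map_zero]

lemma hsLocToLocalized_comp_hsLocalizedToLoc :
    (hsLocToLocalized S R m L).comp (hsLocalizedToLoc S R m L) = RingHom.id _ := by
  refine IsLocalization.ringHom_ext (hsImageSubmonoid S R m L) (hom_ext fun i hi x => ?_)
  simp only [RingHom.comp_apply, RingHom.id_apply, hsLocalizedToLoc, IsLocalization.lift_eq]
  rw [hsAlgToLoc_gen hi, hsLocToLocalized, lift_gen _ _ hi, coeff_hsLocTrunc_algebraMap hi]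

lemma map_hsLocalizedToLoc_comp_hsLocTrunc :
    (TruncPoly.map (hsLocalizedToLoc S R m L)).comp (hsLocTrunc S R m L) =
      toTrunc (RingHom.id (HSAlg S (Localization L) m)) := by
  refine IsLocalization.ringHom_ext L (RingHom.ext fun x => TruncPoly.ext fun i hi => ?_)
  simp only [RingHom.comp_apply]
  rw [TruncPoly.coeff_map _ hi, coeff_hsLocTrunc_algebraMap hi, hsLocalizedToLoc,
    IsLocalization.lift_eq, hsAlgToLoc_gen hi, coeff_toTrunc _ hi, RingHom.id_apply]

lemma hsLocalizedToLoc_comp_hsLocToLocalized :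
    (hsLocalizedToLoc S R m L).comp (hsLocToLocalized S R m L) = RingHom.id _ := by
  refine hom_ext fun i hi z => ?_
  rw [RingHom.comp_apply, hsLocToLocalized, lift_gen _ _ hi, ← TruncPoly.coeff_map _ hi,
    ← RingHom.comp_apply (TruncPoly.map _), map_hsLocalizedToLoc_comp_hsLocTrunc,
    coeff_toTrunc _ hi, RingHom.id_apply]

lemma hsLocalizedToLoc_hsLocCanon (z : Localization L) :
    hsLocalizedToLoc S R m L (hsLocCanon S R m L z) =
      algebraMap (Localization L) (HSAlg S (Localization L) m) z := by
  have h : (hsLocalizedToLoc S R m L).comp (hsLocCanon S R m L) =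
      algebraMap (Localization L) (HSAlg S (Localization L) m) :=
    IsLocalization.ringHom_ext L <| RingHom.ext fun x => by
      simp only [RingHom.comp_apply, hsLocCanon, IsLocalization.map_eq, hsLocalizedToLoc,
        IsLocalization.lift_eq, hsAlgToLoc_algebraMap]
  exact RingHom.congr_fun h z

lemma hsLocalizedToLoc_algebraMap (s : S) :
    hsLocalizedToLoc S R m L (algebraMap S _ s) = algebraMap S (HSAlg S (Localization L) m) s := by
  show hsLocalizedToLoc S R m L (algebraMap _ _ (algebraMap R (HSAlg S R m) (algebraMap S R s))) = _
  rw [hsLocalizedToLoc, IsLocalization.lift_eq, hsAlgToLoc_algebraMap]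
  rfl

/-- For a multiplicative subset `L` of `R`, the localization of the
Hasse–Schmidt algebra satisfies `HS^m_{R/S}[L⁻¹] ≅ HS^m_{R[L⁻¹]/S}` as `R[L⁻¹]`-algebras:
there is an `S`-algebra isomorphism commuting with the canonical maps from `R[L⁻¹]`. -/
theorem hsAlg_localization :
    ∃ e : Localization (hsImageSubmonoid S R m L) ≃ₐ[S] HSAlg S (Localization L) m,
      ∀ z : Localization L,
        e (hsLocCanon S R m L z) = algebraMap (Localization L) (HSAlg S (Localization L) m) z := by
  let e := RingEquiv.ofRingHom (hsLocalizedToLoc S R m L) (hsLocToLocalized S R m L)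
    (hsLocalizedToLoc_comp_hsLocToLocalized S R m L)
    (hsLocToLocalized_comp_hsLocalizedToLoc S R m L)
  exact ⟨AlgEquiv.ofRingEquiv (f := e) (hsLocalizedToLoc_algebraMap S R m L),
    hsLocalizedToLoc_hsLocCanon S R m L⟩
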